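/- Let M₁, M₂ be ITL^e models and Z_n ⊆ ⋯ ⊆ Z_0 ⊆ W₁ × W₂ a bounded ◯-bisimulation. Then for all i ≤ n and all (w₁, w₂) with w₁ Z_i w₂, and every formula φ built from atoms, ⊥, ∧, ∨, →, ◯ with length |φ| ≤ i: M₁, w₁ ⊨ φ iff M₂, w₂ ⊨ φ. -/

import Mathlib

inductive TForm : Type where
  | atom : ℕ → TForm
  | bot : TForm
  | and : TForm → TForm → TForm
  | or : TForm → TForm → TForm
  | imp : TForm → TForm → TForm
  | next : TForm → TForm
  | dia : TForm → TForm
  | box : TForm → TForm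
  | untl : TForm → TForm → TForm
  | rels : TForm → TForm → TForm

/-- Intuitionistic temporal satisfaction over a dynamic poset `(W, ≤, S)`
with valuation `V`. -/
def sat {W : Type} [PartialOrder W] (S : W → W) (V : W → ℕ → Prop) : TForm → W → Prop
  | .atom p, w => V w p
  | .bot, _ => False
  | .and φ ψ, w => sat S V φ w ∧ sat S V ψ w
  | .or φ ψ, w => sat S V φ w ∨ sat S V ψ w
  | .imp φ ψ, w => ∀ v, w ≤ v → sat S V φ v → sat S V ψ v
  | .next φ, w => sat S V φ (S w)
  | .dia φ, w => ∃ k, sat S V φ (S^[k] w)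
  | .box φ, w => ∀ k, sat S V φ (S^[k] w)
  | .untl φ ψ, w => ∃ k, sat S V ψ (S^[k] w) ∧ ∀ i < k, sat S V φ (S^[i] w)
  | .rels φ ψ, w => ∀ k, sat S V ψ (S^[k] w) ∨ ∃ i < k, sat S V φ (S^[i] w)

/-- The length (number of connectives) of a formula. -/
def len : TForm → ℕ
  | .atom _ => 0
  | .bot => 0
  | .and φ ψ => 1 + len φ + len ψ
  | .or φ ψ => 1 + len φ + len ψ
  | .imp φ ψ => 1 + len φ + len ψ
  | .next φ => 1 + len φ
  | .dia φ => 1 + len φ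
  | .box φ => 1 + len φ
  | .untl φ ψ => 1 + len φ + len ψ
  | .rels φ ψ => 1 + len φ + len ψ

/-- Formulas using only the connectives ⊥, ∧, ∨, →, and {next}. -/
def LangNext : TForm → Prop
  | .atom _ => True
  | .bot => True
  | .and φ ψ => LangNext φ ∧ LangNext ψ
  | .or φ ψ => LangNext φ ∧ LangNext ψ
  | .imp φ ψ => LangNext φ ∧ LangNext ψ
  | .next φ => LangNext φ
  | .dia _ => False
  | .box _ => False
  | .untl _ _ => False
  | .rels _ _ => False

/-!
Induction on the level `i`. A formula of length at most `i + 1` is an atom, `⊥`, or a connective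
applied to formulas of length at most `i`, and each clause of the bisimulation at level `i + 1`
reduces the connective to level `i`: the inclusion `Z (i + 1) ⊆ Z i` handles atoms, `∧` and `∨`,
the forth and back clauses handle `→`, and the successor clause handles `◯`. At level `0` only
atoms and `⊥` remain, and atoms are matched by `Z 0`.
-/

structure IsBoundedNextBisim {W₁ W₂ : Type} [LE W₁] [LE W₂]
    (S₁ : W₁ → W₁) (V₁ : W₁ → ℕ → Prop) (S₂ : W₂ → W₂) (V₂ : W₂ → ℕ → Prop)
    (n : ℕ) (Z : ℕ → W₁ → W₂ → Prop) : Prop where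
  chain : ∀ i < n, ∀ w₁ w₂, Z (i + 1) w₁ w₂ → Z i w₁ w₂
  atoms : ∀ i < n, ∀ w₁ w₂, Z i w₁ w₂ → ∀ p, V₁ w₁ p ↔ V₂ w₂ p
  forth : ∀ i < n, ∀ w₁ w₂, Z (i + 1) w₁ w₂ → ∀ v₁, w₁ ≤ v₁ → ∃ v₂, w₂ ≤ v₂ ∧ Z i v₁ v₂
  back : ∀ i < n, ∀ w₁ w₂, Z (i + 1) w₁ w₂ → ∀ v₂, w₂ ≤ v₂ → ∃ v₁, w₁ ≤ v₁ ∧ Z i v₁ v₂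
  next : ∀ i < n, ∀ w₁ w₂, Z (i + 1) w₁ w₂ → Z i (S₁ w₁) (S₂ w₂)

namespace IsBoundedNextBisim

variable {W₁ W₂ : Type} [PartialOrder W₁] [PartialOrder W₂]
  {S₁ : W₁ → W₁} {V₁ : W₁ → ℕ → Prop} {S₂ : W₂ → W₂} {V₂ : W₂ → ℕ → Prop}
  {n : ℕ} {Z : ℕ → W₁ → W₂ → Prop}

theorem sat_iff_of_len_eq_zero (hZ : IsBoundedNextBisim S₁ V₁ S₂ V₂ n Z) (hn : 0 < n)
    {φ : TForm} (hφ : LangNext φ) (hlen : len φ = 0) {w₁ : W₁} {w₂ : W₂} (h : Z 0 w₁ w₂) :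
    sat S₁ V₁ φ w₁ ↔ sat S₂ V₂ φ w₂ := by
  cases φ with
  | atom p => exact hZ.atoms 0 hn w₁ w₂ h p
  | bot => exact Iff.rfl
  | and | or | imp | next | untl | rels => simp [len] at hlen
  | dia | box => exact hφ.elim

theorem sat_iff_succ (hZ : IsBoundedNextBisim S₁ V₁ S₂ V₂ n Z) {j : ℕ} (hj : j < n)
    (ih : ∀ φ, LangNext φ → len φ ≤ j → ∀ w₁ w₂, Z j w₁ w₂ →
      (sat S₁ V₁ φ w₁ ↔ sat S₂ V₂ φ w₂))
    {φ : TForm} (hφ : LangNext φ) (hlen : len φ ≤ j + 1) {w₁ : W₁} {w₂ : W₂}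
    (h : Z (j + 1) w₁ w₂) :
    sat S₁ V₁ φ w₁ ↔ sat S₂ V₂ φ w₂ := by
  have h' := hZ.chain j hj w₁ w₂ h
  cases φ with
  | atom p => exact ih (.atom p) trivial (Nat.zero_le j) w₁ w₂ h'
  | bot => exact Iff.rfl
  | and φ ψ =>
    simp only [len] at hlen
    exact and_congr (ih φ hφ.1 (by omega) w₁ w₂ h') (ih ψ hφ.2 (by omega) w₁ w₂ h')
  | or φ ψ =>
    simp only [len] at hlen
    exact or_congr (ih φ hφ.1 (by omega) w₁ w₂ h') (ih ψ hφ.2 (by omega) w₁ w₂ h')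
  | imp φ ψ =>
    simp only [len] at hlen
    have ihφ := fun v₁ v₂ ↦ ih φ hφ.1 (by omega) v₁ v₂
    have ihψ := fun v₁ v₂ ↦ ih ψ hφ.2 (by omega) v₁ v₂
    constructor
    · intro himp v₂ hv₂ hφv₂
      obtain ⟨v₁, hv₁, hv⟩ := hZ.back j hj w₁ w₂ h v₂ hv₂
      exact (ihψ v₁ v₂ hv).mp (himp v₁ hv₁ ((ihφ v₁ v₂ hv).mpr hφv₂))
    · intro himp v₁ hv₁ hφv₁
      obtain ⟨v₂, hv₂, hv⟩ := hZ.forth j hj w₁ w₂ h v₁ hv₁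
      exact (ihψ v₁ v₂ hv).mpr (himp v₂ hv₂ ((ihφ v₁ v₂ hv).mp hφv₁))
  | next φ =>
    simp only [len] at hlen
    exact ih φ hφ (by omega) _ _ (hZ.next j hj w₁ w₂ h)
  | dia | box | untl | rels => exact hφ.elim

theorem sat_iff (hZ : IsBoundedNextBisim S₁ V₁ S₂ V₂ n Z) (hn : 0 < n) {i : ℕ} (hi : i ≤ n)
    {φ : TForm} (hφ : LangNext φ) (hlen : len φ ≤ i) {w₁ : W₁} {w₂ : W₂} (h : Z i w₁ w₂) :
    sat S₁ V₁ φ w₁ ↔ sat S₂ V₂ φ w₂ := by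
  induction i generalizing φ w₁ w₂ with
  | zero => exact hZ.sat_iff_of_len_eq_zero hn hφ (Nat.le_zero.mp hlen) h
  | succ j ih =>
    exact hZ.sat_iff_succ hi (fun ψ hψ hψlen _ _ ↦ ih (by omega) hψ hψlen) hφ hlen h

end IsBoundedNextBisim

theorem next_bisim_invariance_general {W₁ W₂ : Type} [PartialOrder W₁] [PartialOrder W₂]
    (S₁ : W₁ → W₁) (V₁ : W₁ → ℕ → Prop) (S₂ : W₂ → W₂) (V₂ : W₂ → ℕ → Prop)
    (n : ℕ) (hn : 0 < n) (Z : ℕ → W₁ → W₂ → Prop)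
    (hchain : ∀ i < n, ∀ w₁ w₂, Z (i+1) w₁ w₂ → Z i w₁ w₂)
    (hatoms : ∀ i < n, ∀ w₁ w₂, Z i w₁ w₂ → ∀ p, V₁ w₁ p ↔ V₂ w₂ p)
    (hforth_imp : ∀ i < n, ∀ w₁ w₂, Z (i+1) w₁ w₂ →
      ∀ v₁, w₁ ≤ v₁ → ∃ v₂, w₂ ≤ v₂ ∧ Z i v₁ v₂)
    (hback_imp : ∀ i < n, ∀ w₁ w₂, Z (i+1) w₁ w₂ →
      ∀ v₂, w₂ ≤ v₂ → ∃ v₁, w₁ ≤ v₁ ∧ Z i v₁ v₂)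
    (hnext : ∀ i < n, ∀ w₁ w₂, Z (i+1) w₁ w₂ → Z i (S₁ w₁) (S₂ w₂)) :
    ∀ i ≤ n, ∀ w₁ w₂, Z i w₁ w₂ → ∀ φ, LangNext φ → len φ ≤ i →
      (sat S₁ V₁ φ w₁ ↔ sat S₂ V₂ φ w₂) := by
  have hZ : IsBoundedNextBisim S₁ V₁ S₂ V₂ n Z := ⟨hchain, hatoms, hforth_imp, hback_imp, hnext⟩
  exact fun i hi w₁ w₂ h φ hφ hlen ↦ hZ.sat_iff hn hi hφ hlen h

/-- Bounded ◯-bisimulations preserve ◯-formulas of bounded length. -/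
theorem next_bisim_invariance {W₁ W₂ : Type} [PartialOrder W₁] [PartialOrder W₂]
    (S₁ : W₁ → W₁) (V₁ : W₁ → ℕ → Prop) (S₂ : W₂ → W₂) (V₂ : W₂ → ℕ → Prop)
    (hS₁ : ∀ w v : W₁, w ≤ v → S₁ w ≤ S₁ v)
    (hV₁ : ∀ w v : W₁, w ≤ v → ∀ p, V₁ w p → V₁ v p)
    (hS₂ : ∀ w v : W₂, w ≤ v → S₂ w ≤ S₂ v)
    (hV₂ : ∀ w v : W₂, w ≤ v → ∀ p, V₂ w p → V₂ v p)
    (n : ℕ) (hn : 0 < n) (Z : ℕ → W₁ → W₂ → Prop)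
    (hchain : ∀ i < n, ∀ w₁ w₂, Z (i+1) w₁ w₂ → Z i w₁ w₂)
    (hatoms : ∀ i < n, ∀ w₁ w₂, Z i w₁ w₂ → ∀ p, V₁ w₁ p ↔ V₂ w₂ p)
    (hforth_imp : ∀ i < n, ∀ w₁ w₂, Z (i+1) w₁ w₂ →
      ∀ v₁, w₁ ≤ v₁ → ∃ v₂, w₂ ≤ v₂ ∧ Z i v₁ v₂)
    (hback_imp : ∀ i < n, ∀ w₁ w₂, Z (i+1) w₁ w₂ →
      ∀ v₂, w₂ ≤ v₂ → ∃ v₁, w₁ ≤ v₁ ∧ Z i v₁ v₂)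
    (hnext : ∀ i < n, ∀ w₁ w₂, Z (i+1) w₁ w₂ → Z i (S₁ w₁) (S₂ w₂)) :
    ∀ i ≤ n, ∀ w₁ w₂, Z i w₁ w₂ → ∀ φ, LangNext φ → len φ ≤ i →
      (sat S₁ V₁ φ w₁ ↔ sat S₂ V₂ φ w₂) :=
  next_bisim_invariance_general S₁ V₁ S₂ V₂ n hn Z hchain hatoms hforth_imp hback_imp hnext
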